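/- arXiv:2108.03352 — 6 statements merged into one kernel-verified Lean document; each statement's English description precedes it below -/
import Mathlib

section
/- For arbitrary Q, an operator T is Q-partly nonexpansive if and only if I − T is Qᵀ-partly nonexpansive. -/
open Matrix Finset

/-- Q-quadratic form: `‖a‖_Q² = ⟨Q a, a⟩`. -/
noncomputable def qnorm {n : ℕ} (Q : Matrix (Fin n) (Fin n) ℝ) (a : Fin n → ℝ) : ℝ :=
  Q.mulVec a ⬝ᵥ a

/-- Q-based pairing: `⟨a, b⟩_Q = ⟨Q a, b⟩`. -/
noncomputable def qinner {n : ℕ} (Q : Matrix (Fin n) (Fin n) ℝ) (a b : Fin n → ℝ) : ℝ :=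
  Q.mulVec a ⬝ᵥ b

lemma key_qq {n : ℕ} (Q : Matrix (Fin n) (Fin n) ℝ) (x y : Fin n → ℝ) :
    qinner Qᵀ x (x - y) - qnorm Qᵀ (x - y) = qinner Q x y - qnorm Q y := by
  have hc : ∀ a b : Fin n → ℝ, Q *ᵥ a ⬝ᵥ b = b ᵥ* Q ⬝ᵥ a := by
    intro a b
    rw [← Matrix.dotProduct_mulVec, dotProduct_comm]
  simp only [qinner, qnorm, mulVec_transpose, sub_vecMul, dotProduct_sub,
    sub_dotProduct, hc]
  ring

theorem stmt3 (n : ℕ) (Q : Matrix (Fin n) (Fin n) ℝ)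
    (T : (Fin n → ℝ) → (Fin n → ℝ)) :
    (∀ b1 b2, qinner Q (b1 - b2) (T b1 - T b2) ≥ qnorm Q (T b1 - T b2)) ↔
    (∀ b1 b2, qinner Qᵀ (b1 - b2) ((b1 - T b1) - (b2 - T b2)) ≥
      qnorm Qᵀ ((b1 - T b1) - (b2 - T b2))) := by
  have hrw : ∀ b1 b2 : Fin n → ℝ,
      (b1 - T b1) - (b2 - T b2) = (b1 - b2) - (T b1 - T b2) := by
    intro b1 b2; abel
  constructor <;> intro h b1 b2
  · have := key_qq Q (b1 - b2) (T b1 - T b2)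
    rw [hrw]; linarith [h b1 b2]
  · have := key_qq Q (b1 - b2) (T b1 - T b2)
    have h2 := h b1 b2
    rw [hrw] at h2
    linarith
end

section
/- Suppose T = (1−α) I + α K with α ∈ (0,1) and K a Q-based ξ-Lipschitz operator (i.e. ‖K b1 − K b2‖_Q² ≤ ξ² ‖b1 − b2‖_Q² for all b1, b2), where Q is arbitrary. Then for all b1, b2: ‖T b1 − T b2‖_Q² ≤ (1 − α + α ξ²) ‖b1 − b2‖_Q² − ((1−α)/α) ‖(I−T) b1 − (I−T) b2‖_Q². -/
open Matrix Finset

lemma qnorm_comb {n : ℕ} (Q : Matrix (Fin n) (Fin n) ℝ) (a b : ℝ) (x y : Fin n → ℝ) :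
    qnorm Q (a • x + b • y)
      = a ^ 2 * qnorm Q x + a * b * (qinner Q x y + qinner Q y x) + b ^ 2 * qnorm Q y := by
  simp [qnorm, qinner, mulVec_add, mulVec_smul, dotProduct_add, add_dotProduct,
    dotProduct_smul, smul_dotProduct, smul_eq_mul]
  ring

theorem stmt5 (n : ℕ) (Q : Matrix (Fin n) (Fin n) ℝ) (α ξ : ℝ)
    (hα : 0 < α) (hα1 : α < 1) (hξ : 0 < ξ)
    (T K : (Fin n → ℝ) → (Fin n → ℝ))
    (hK : ∀ b1 b2, qnorm Q (K b1 - K b2) ≤ ξ ^ 2 * qnorm Q (b1 - b2))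
    (hT : ∀ b, T b = (1 - α) • b + α • K b) :
    ∀ b1 b2, qnorm Q (T b1 - T b2) ≤ (1 - α + α * ξ ^ 2) * qnorm Q (b1 - b2)
      - (1 - α) / α * qnorm Q ((b1 - T b1) - (b2 - T b2)) := by
  intro b1 b2
  set u := b1 - b2 with hu
  set v := K b1 - K b2 with hv
  have h1 : T b1 - T b2 = (1 - α) • u + α • v := by
    rw [hT, hT, hu, hv]; module
  have h2 : (b1 - T b1) - (b2 - T b2) = α • (u - v) := by
    rw [hT, hT, hu, hv]; module
  have h3 : u - v = (1 : ℝ) • u + (-1 : ℝ) • v := by module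
  have h4 : α • (u - v) = α • u + (-α) • v := by module
  rw [h1, h2, h4, qnorm_comb, qnorm_comb]
  have e3 : qnorm Q (u - v) = qnorm Q ((1 : ℝ) • u + (-1 : ℝ) • v) := by rw [← h3]
  rw [qnorm_comb] at e3
  have hKuv : qnorm Q v ≤ ξ ^ 2 * qnorm Q u := hK b1 b2
  have hdiv : (1 - α) / α * (α ^ 2 * qnorm Q u + α * -α * (qinner Q u v + qinner Q v u)
      + (-α) ^ 2 * qnorm Q v)
      = (1 - α) * (α * qnorm Q u - α * (qinner Q u v + qinner Q v u) + α * qnorm Q v) := by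
    field_simp; ring
  rw [hdiv]
  nlinarith [hKuv, hα, hα1, mul_pos hα (sub_pos.mpr hα1)]
end

section
/- Let Q be symmetric positive semidefinite and T = (1−α)I + αK with K Q-based ξ-Lipschitz, α ∈ (0,1), and 0 < ξ ≤ (1−α)/α. Then T is Q-based β-cocoercive with β = (1/2)(1 + 1/(1 − α + α ξ²)), i.e. ⟨b1 − b2, T b1 − T b2⟩_Q ≥ β ‖T b1 − T b2‖_Q² for all b1, b2. -/
open Matrix Finset

lemma qinner_symm {n : ℕ} (Q : Matrix (Fin n) (Fin n) ℝ) (hQs : Qᵀ = Q)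
    (a b : Fin n → ℝ) : qinner Q a b = qinner Q b a := by
  unfold qinner
  rw [dotProduct_comm, Matrix.dotProduct_mulVec, ← Matrix.mulVec_transpose, hQs]

lemma qnorm_expand {n : ℕ} (Q : Matrix (Fin n) (Fin n) ℝ) (hQs : Qᵀ = Q)
    (x y : ℝ) (u v : Fin n → ℝ) :
    qnorm Q (x • u + y • v)
      = x ^ 2 * qnorm Q u + 2 * x * y * qinner Q u v + y ^ 2 * qnorm Q v := by
  have hsym := qinner_symm Q hQs v u
  unfold qinner at hsym
  unfold qnorm qinner
  simp only [Matrix.mulVec_add, Matrix.mulVec_smul, add_dotProduct,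
    smul_dotProduct, dotProduct_add, dotProduct_smul,
    smul_eq_mul]
  rw [hsym]; ring

lemma key_scalar (α ξ s t p : ℝ) (hα : 0 < α) (hα1 : α < 1) (hξ : 0 < ξ)
    (hξ2 : α * ξ ≤ 1 - α) (hs : 0 ≤ s) (ht : 0 ≤ t) (htξ : t ≤ ξ ^ 2 * s)
    (hp : p ^ 2 ≤ s * t) :
    (1 - α) * s + α * p ≥
      (1 / 2 * (1 + 1 / (1 - α + α * ξ ^ 2))) * ((1 - α) ^ 2 * s + 2 * α * (1 - α) * p + α ^ 2 * t) := by
  have hc : 0 < 1 - α + α * ξ ^ 2 := by nlinarith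
  have hp' : p ≤ ξ * s := by
    rcases eq_or_lt_of_le hs with h | h
    · have hs0 : s = 0 := h.symm
      have hp2 : p ^ 2 ≤ 0 := by rw [hs0] at hp; linarith
      have hp0 : p = 0 := by nlinarith [sq_nonneg p]
      rw [hp0, hs0, mul_zero]
    · have hps : p ^ 2 ≤ (ξ * s) ^ 2 := by nlinarith
      nlinarith [sq_nonneg (p - ξ * s), mul_pos hξ h]
  have hβ : (1 / 2 * (1 + 1 / (1 - α + α * ξ ^ 2)))
      = ((1 - α + α * ξ ^ 2) + 1) / (2 * (1 - α + α * ξ ^ 2)) := by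
    field_simp
  have hB : 0 ≤ α * ξ := by positivity
  have hAB : (0:ℝ) ≤ (1 - α) ^ 2 - (α * ξ) ^ 2 := by
    nlinarith [mul_nonneg (by linarith : (0:ℝ) ≤ 1 - α - α * ξ) (by linarith : (0:ℝ) ≤ 1 - α + α * ξ)]
  rw [hβ, ge_iff_le, div_mul_eq_mul_div, div_le_iff₀ (by linarith)]
  nlinarith [mul_nonneg (by nlinarith : (0:ℝ) ≤ ((1 - α + α * ξ ^ 2) + 1) * α ^ 2) (by linarith : (0:ℝ) ≤ ξ ^ 2 * s - t),
    mul_nonneg (by nlinarith [hAB] : (0:ℝ) ≤ 2 * α * ((1 - α) ^ 2 - (α * ξ) ^ 2)) (by linarith : (0:ℝ) ≤ ξ * s - p),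
    mul_nonneg (mul_nonneg (by positivity : (0:ℝ) ≤ α * (1 - ξ) ^ 2) hAB) hs]

theorem stmt6 (n : ℕ) (Q : Matrix (Fin n) (Fin n) ℝ) (hQs : Qᵀ = Q)
    (hQp : ∀ a, 0 ≤ qnorm Q a) (α ξ : ℝ)
    (hα : 0 < α) (hα1 : α < 1) (hξ : 0 < ξ) (hξ2 : ξ ≤ (1 - α) / α)
    (T K : (Fin n → ℝ) → (Fin n → ℝ))
    (hK : ∀ b1 b2, qnorm Q (K b1 - K b2) ≤ ξ ^ 2 * qnorm Q (b1 - b2))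
    (hT : ∀ b, T b = (1 - α) • b + α • K b) :
    ∀ b1 b2, qinner Q (b1 - b2) (T b1 - T b2) ≥
      (1 / 2 * (1 + 1 / (1 - α + α * ξ ^ 2))) * qnorm Q (T b1 - T b2) := by
  intro b1 b2
  have hTd : T b1 - T b2 = (1 - α) • (b1 - b2) + α • (K b1 - K b2) := by
    rw [hT, hT]
    module
  have hs : 0 ≤ qnorm Q (b1 - b2) := hQp _
  have ht : 0 ≤ qnorm Q (K b1 - K b2) := hQp _
  have htξ := hK b1 b2
  -- Cauchy–Schwarz
  have hcs : ∀ x : ℝ, 0 ≤ qnorm Q (K b1 - K b2) * (x * x)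
      + 2 * qinner Q (b1 - b2) (K b1 - K b2) * x + qnorm Q (b1 - b2) := by
    intro x
    have h := hQp (x • (K b1 - K b2) + (1 : ℝ) • (b1 - b2))
    rw [qnorm_expand Q hQs x 1 (K b1 - K b2) (b1 - b2),
      qinner_symm Q hQs (K b1 - K b2) (b1 - b2)] at h
    nlinarith [h]
  have hdisc := discrim_le_zero hcs
  have hp2 : qinner Q (b1 - b2) (K b1 - K b2) ^ 2
      ≤ qnorm Q (b1 - b2) * qnorm Q (K b1 - K b2) := by
    unfold discrim at hdisc
    nlinarith [hdisc]
  have h1 : qinner Q (b1 - b2) (T b1 - T b2)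
      = (1 - α) * qnorm Q (b1 - b2) + α * qinner Q (b1 - b2) (K b1 - K b2) := by
    rw [hTd]
    unfold qinner qnorm
    simp only [dotProduct_add, dotProduct_smul, smul_eq_mul]
  have h2 : qnorm Q (T b1 - T b2) = (1 - α) ^ 2 * qnorm Q (b1 - b2)
      + 2 * α * (1 - α) * qinner Q (b1 - b2) (K b1 - K b2)
      + α ^ 2 * qnorm Q (K b1 - K b2) := by
    rw [hTd, qnorm_expand Q hQs (1 - α) α (b1 - b2) (K b1 - K b2)]; ring
  rw [h1, h2]
  exact key_scalar α ξ _ _ _ hα hα1 hξ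
    (by rw [le_div_iff₀ hα] at hξ2; linarith [hξ2]) hs ht htξ hp2
end

section
/- Let Q be positive semidefinite and T = (1−α)I + αK with K Q-based ξ-Lipschitz, α ∈ (0,1), and 0 < ξ ≤ min{(1−α)/α, 1}. Then T is Q-firmly nonexpansive: ‖T b1 − T b2‖_Q² + ‖(I−T)b1 − (I−T)b2‖_Q² ≤ ‖b1 − b2‖_Q² for all b1, b2. -/
open Matrix Finset

lemma qnorm_combo {n : ℕ} (Q : Matrix (Fin n) (Fin n) ℝ) (c1 c2 : ℝ) (x y : Fin n → ℝ) :
    qnorm Q (c1 • x + c2 • y) =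
      c1 ^ 2 * qnorm Q x + c1 * c2 * (qinner Q x y + qinner Q y x) + c2 ^ 2 * qnorm Q y := by
  simp [qnorm, qinner, Matrix.mulVec_add, Matrix.mulVec_smul, dotProduct_add,
    add_dotProduct, smul_dotProduct, dotProduct_smul, smul_eq_mul]
  ring

lemma qnorm_cs {n : ℕ} (Q : Matrix (Fin n) (Fin n) ℝ) (hQp : ∀ a, 0 ≤ qnorm Q a)
    (x y : Fin n → ℝ) :
    (qinner Q x y + qinner Q y x) ^ 2 ≤ 4 * qnorm Q x * qnorm Q y := by
  have h : ∀ t : ℝ, 0 ≤ qnorm Q y * (t * t) + (qinner Q x y + qinner Q y x) * t + qnorm Q x := by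
    intro t
    have := hQp ((1 : ℝ) • x + t • y)
    rw [qnorm_combo] at this
    nlinarith [this]
  have := discrim_le_zero h
  rw [discrim] at this
  nlinarith [this]

theorem stmt7 (n : ℕ) (Q : Matrix (Fin n) (Fin n) ℝ)
    (hQp : ∀ a, 0 ≤ qnorm Q a) (α ξ : ℝ)
    (hα : 0 < α) (hα1 : α < 1) (hξ : 0 < ξ) (hξ2 : ξ ≤ min ((1 - α) / α) 1)
    (T K : (Fin n → ℝ) → (Fin n → ℝ))
    (hK : ∀ b1 b2, qnorm Q (K b1 - K b2) ≤ ξ ^ 2 * qnorm Q (b1 - b2))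
    (hT : ∀ b, T b = (1 - α) • b + α • K b) :
    ∀ b1 b2, qnorm Q (T b1 - T b2) + qnorm Q ((b1 - T b1) - (b2 - T b2)) ≤ qnorm Q (b1 - b2) := by
  intro b1 b2
  set d := b1 - b2 with hd
  set e := K b1 - K b2 with he
  have h1 : T b1 - T b2 = (1 - α) • d + α • e := by
    rw [hT, hT, hd, he]; module
  have h2 : (b1 - T b1) - (b2 - T b2) = α • d + (-α) • e := by
    rw [hT, hT, hd, he]; module
  rw [h1, h2, qnorm_combo, qnorm_combo]
  set Nd := qnorm Q d with hNd
  set Ne := qnorm Q e with hNe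
  set S := qinner Q d e + qinner Q e d with hS
  have hKe : Ne ≤ ξ ^ 2 * Nd := hK b1 b2
  have hNd0 : 0 ≤ Nd := hQp d
  have hNe0 : 0 ≤ Ne := hQp e
  have hcs : S ^ 2 ≤ 4 * Nd * Ne := qnorm_cs Q hQp d e
  have hξ1 : ξ ≤ 1 := le_trans hξ2 (min_le_right _ _)
  have hαξ : α * ξ ≤ 1 - α := by
    have h := le_trans hξ2 (min_le_left _ _)
    calc α * ξ ≤ α * ((1 - α) / α) := by nlinarith
    _ = 1 - α := by field_simp
  have hS2 : S ^ 2 ≤ (2 * ξ * Nd) ^ 2 := by nlinarith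
  have h2ξ : 0 ≤ 2 * ξ * Nd := by positivity
  have hSle : S ≤ 2 * ξ * Nd := by nlinarith [sq_nonneg (S + 2 * ξ * Nd)]
  have hSge : -(2 * ξ * Nd) ≤ S := by nlinarith [sq_nonneg (S - 2 * ξ * Nd)]
  clear_value Nd Ne S
  clear hNd hNe hS hd he h1 h2 hK hT hQp
  have h3 : 2 * α ^ 2 * Ne ≤ 2 * α ^ 2 * (ξ ^ 2 * Nd) :=
    mul_le_mul_of_nonneg_left hKe (by positivity)
  rcases le_or_gt α (1/2) with hc | hc
  · have hA : α * (1 - 2*α) * S ≤ α * (1 - 2*α) * (2 * ξ * Nd) :=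
      mul_le_mul_of_nonneg_left hSle (by nlinarith)
    have hB : 0 ≤ α * (α * ((1 - ξ) * (ξ * Nd))) := by
      have h1ξ : (0:ℝ) ≤ 1 - ξ := by linarith
      positivity
    have hC : 0 ≤ 2 * α * ((1 - α) * ((1 - ξ) * Nd)) := by
      have : (0:ℝ) ≤ 1 - ξ := by linarith
      have : (0:ℝ) ≤ 1 - α := by linarith
      positivity
    nlinarith [hA, hB, hC, h3]
  · have hA : α * (2*α - 1) * (-(2 * ξ * Nd)) ≤ α * (2*α - 1) * S :=
      mul_le_mul_of_nonneg_left hSge (by nlinarith)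
    have hB : 2 * α * ξ * (α * ξ) * Nd ≤ 2 * α * ξ * (1 - α) * Nd := by
      have h' : 2 * α * ξ * (α * ξ) ≤ 2 * α * ξ * (1 - α) :=
        mul_le_mul_of_nonneg_left hαξ (by positivity)
      exact mul_le_mul_of_nonneg_right h' hNd0
    have hC : α * ξ * (2 * α * Nd) ≤ (1 - α) * (2 * α * Nd) :=
      mul_le_mul_of_nonneg_right hαξ (by positivity)
    nlinarith [hA, hB, hC, h3]
end

section
/- Let T be Q-based ξ-Lipschitz α-averaged with α ∈ (0,1), ξ > 0, Q arbitrary, and let γ ∈ (0, 1/(1−α)). Then I − γT is Q-based ξ'-Lipschitz α'-averaged with ξ' = αξ/(1−α) and α' = γ(1−α). -/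
open Matrix Finset

lemma qnorm_smul {n : ℕ} (Q : Matrix (Fin n) (Fin n) ℝ) (c : ℝ) (v : Fin n → ℝ) :
    qnorm Q (c • v) = c ^ 2 * qnorm Q v := by
  simp [qnorm, Matrix.mulVec_smul, smul_dotProduct, dotProduct_smul]
  ring

theorem stmt8 (n : ℕ) (Q : Matrix (Fin n) (Fin n) ℝ) (α ξ γ : ℝ)
    (hα : 0 < α) (hα1 : α < 1) (hξ : 0 < ξ)
    (hγ : 0 < γ) (hγ1 : γ < 1 / (1 - α))
    (T K : (Fin n → ℝ) → (Fin n → ℝ))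
    (hK : ∀ b1 b2, qnorm Q (K b1 - K b2) ≤ ξ ^ 2 * qnorm Q (b1 - b2))
    (hT : ∀ b, T b = (1 - α) • b + α • K b) :
    ∃ K' : (Fin n → ℝ) → (Fin n → ℝ),
      (∀ b1 b2, qnorm Q (K' b1 - K' b2) ≤ (α * ξ / (1 - α)) ^ 2 * qnorm Q (b1 - b2)) ∧
      (∀ b, b - γ • T b = (1 - γ * (1 - α)) • b + (γ * (1 - α)) • K' b) := by
  have h1α : (1 : ℝ) - α ≠ 0 := by linarith
  refine ⟨fun b => (-(α / (1 - α))) • K b, ?_, ?_⟩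
  · intro b1 b2
    have : (-(α / (1 - α))) • K b1 - (-(α / (1 - α))) • K b2
        = (-(α / (1 - α))) • (K b1 - K b2) := by rw [smul_sub]
    rw [this, qnorm_smul]
    have hc : (-(α / (1 - α))) ^ 2 = (α / (1 - α)) ^ 2 := by ring
    rw [hc]
    have hnn : (0 : ℝ) ≤ (α / (1 - α)) ^ 2 := sq_nonneg _
    calc (α / (1 - α)) ^ 2 * qnorm Q (K b1 - K b2)
        ≤ (α / (1 - α)) ^ 2 * (ξ ^ 2 * qnorm Q (b1 - b2)) :=
          mul_le_mul_of_nonneg_left (hK b1 b2) hnn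
      _ = (α * ξ / (1 - α)) ^ 2 * qnorm Q (b1 - b2) := by
          field_simp
  · intro b
    rw [hT b]
    funext i
    simp only [Pi.sub_apply, Pi.add_apply, Pi.smul_apply, smul_eq_mul]
    field_simp
    ring
end

section
/- Let Q be symmetric positive semidefinite, T satisfy the averagedness inequality ‖T b1 − T b2‖_Q² ≤ (1−α+αξ²)‖b1−b2‖_Q² − ((1−α)/α)‖(I−T)b1−(I−T)b2‖_Q² with α ∈ (0,1), ξ ∈ (0,1], and let b⋆ be a fixed point of T, b^{k+1} = T b^k. Then the sequential error decays at rate O(1/√k): ‖b^{k+1} − b^k‖_Q² ≤ (1/(k+1)) · (α/(1−α)) · ‖b^0 − b⋆‖_Q² for all k ∈ ℕ. -/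
/-!
Applying the averagedness inequality to the pair `(b^k, b⋆)` shows that `‖b^k − b⋆‖_Q²` drops by at
least `((1−α)/α)‖b^{k+1} − b^k‖_Q²` per step, so the partial sums of these step lengths are at most
`(α/(1−α))‖b^0 − b⋆‖_Q²`. Applying it to the pair `(b^{k+1}, b^k)` shows that the step lengths are
nonincreasing, so the `k`-th one is at most the average of the first `k + 1`.
-/

open Matrix Finset

lemma qnorm_neg {n : ℕ} (Q : Matrix (Fin n) (Fin n) ℝ) (a : Fin n → ℝ) :
    qnorm Q (-a) = qnorm Q a := by
  simp [qnorm, Matrix.mulVec_neg]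

lemma mul_sum_range_le_sub_of_le_sub {d e : ℕ → ℝ} {c : ℝ}
    (hstep : ∀ k, e (k + 1) + c * d k ≤ e k) (k : ℕ) :
    c * ∑ j ∈ range k, d j ≤ e 0 - e k := by
  rw [mul_sum, ← sum_range_sub' e k]
  exact sum_le_sum fun j _ => by linarith [hstep j]

lemma succ_mul_le_sum_range_succ_of_antitone {d : ℕ → ℝ} (hd : Antitone d) (k : ℕ) :
    ((k : ℝ) + 1) * d k ≤ ∑ j ∈ range (k + 1), d j := by
  have h := card_nsmul_le_sum (range (k + 1)) d (d k)
    fun j hj => hd (Nat.lt_succ_iff.mp (mem_range.mp hj))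
  simpa [nsmul_eq_mul] using h

lemma mul_succ_mul_le_of_antitone_of_le_sub {d e : ℕ → ℝ} {c : ℝ} (hc : 0 ≤ c)
    (hd : Antitone d) (he : ∀ k, 0 ≤ e k) (hstep : ∀ k, e (k + 1) + c * d k ≤ e k) (k : ℕ) :
    c * (((k : ℝ) + 1) * d k) ≤ e 0 :=
  calc c * (((k : ℝ) + 1) * d k)
      ≤ c * ∑ j ∈ range (k + 1), d j :=
        mul_le_mul_of_nonneg_left (succ_mul_le_sum_range_succ_of_antitone hd k) hc
    _ ≤ e 0 - e (k + 1) := mul_sum_range_le_sub_of_le_sub hstep (k + 1)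
    _ ≤ e 0 := by linarith [he (k + 1)]

section Averaged

variable {E : Type*} [AddCommGroup E] {q : E → ℝ} {T : E → E} {κ c : ℝ}

lemma add_mul_residual_le_of_averaged (hq : ∀ x, 0 ≤ q x) (hκ : κ ≤ 1)
    (hT : ∀ x y, q (T x - T y) ≤ κ * q (x - y) - c * q ((x - T x) - (y - T y))) (x y : E) :
    q (T x - T y) + c * q ((x - T x) - (y - T y)) ≤ q (x - y) := by
  nlinarith [hT x y, hq (x - y)]

variable {b : ℕ → E}

lemma antitone_orbit_step_of_averaged (hq : ∀ x, 0 ≤ q x) (hκ : κ ≤ 1) (hc : 0 ≤ c)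
    (hT : ∀ x y, q (T x - T y) ≤ κ * q (x - y) - c * q ((x - T x) - (y - T y)))
    (hb : ∀ k, b (k + 1) = T (b k)) :
    Antitone fun k => q (b (k + 1) - b k) := by
  refine antitone_nat_of_succ_le fun k => ?_
  have h := add_mul_residual_le_of_averaged hq hκ hT (b (k + 1)) (b k)
  rw [← hb (k + 1), ← hb k] at h
  nlinarith [hq (b (k + 1) - b (k + 1 + 1) - (b k - b (k + 1)))]

lemma orbit_dist_fixedPoint_add_step_le (hq : ∀ x, 0 ≤ q x) (hq_neg : ∀ x, q (-x) = q x)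
    (hκ : κ ≤ 1) (hT : ∀ x y, q (T x - T y) ≤ κ * q (x - y) - c * q ((x - T x) - (y - T y)))
    {z : E} (hz : T z = z) (hb : ∀ k, b (k + 1) = T (b k)) (k : ℕ) :
    q (b (k + 1) - z) + c * q (b (k + 1) - b k) ≤ q (b k - z) := by
  have h := add_mul_residual_le_of_averaged hq hκ hT (b k) z
  rwa [hz, ← hb k, sub_self, sub_zero, ← neg_sub (b (k + 1)) (b k), hq_neg] at h

end Averaged

theorem stmt14_general (n : ℕ) (Q : Matrix (Fin n) (Fin n) ℝ)
    (hQp : ∀ a, 0 ≤ qnorm Q a) (α ξ : ℝ)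
    (hα : 0 < α) (hα1 : α < 1) (hξ : 0 < ξ) (hξ1 : ξ ≤ 1)
    (T : (Fin n → ℝ) → (Fin n → ℝ))
    (hT : ∀ b1 b2, qnorm Q (T b1 - T b2) ≤ (1 - α + α * ξ ^ 2) * qnorm Q (b1 - b2)
      - (1 - α) / α * qnorm Q ((b1 - T b1) - (b2 - T b2)))
    (bstar : Fin n → ℝ) (hfix : T bstar = bstar)
    (b : ℕ → (Fin n → ℝ)) (hb : ∀ k, b (k + 1) = T (b k)) :
    ∀ k : ℕ, qnorm Q (b (k + 1) - b k) ≤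
      1 / ((k : ℝ) + 1) * (α / (1 - α)) * qnorm Q (b 0 - bstar) := by
  intro k
  have hc : 0 < (1 - α) / α := div_pos (by linarith) hα
  have hκ : 1 - α + α * ξ ^ 2 ≤ 1 := by nlinarith [pow_le_one₀ hξ.le hξ1 (n := 2)]
  have h := mul_succ_mul_le_of_antitone_of_le_sub hc.le
    (antitone_orbit_step_of_averaged hQp hκ hc.le hT hb) (fun k => hQp (b k - bstar))
    (orbit_dist_fixedPoint_add_step_le hQp (qnorm_neg Q) hκ hT hfix hb) k
  have hk : (0 : ℝ) < (k : ℝ) + 1 := by positivity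
  calc qnorm Q (b (k + 1) - b k)
      ≤ qnorm Q (b 0 - bstar) / ((1 - α) / α * ((k : ℝ) + 1)) := by
        rw [le_div_iff₀ (by positivity)]; linarith
    _ = 1 / ((k : ℝ) + 1) * (α / (1 - α)) * qnorm Q (b 0 - bstar) := by
        field_simp [(sub_pos.mpr hα1).ne']

theorem stmt14 (n : ℕ) (Q : Matrix (Fin n) (Fin n) ℝ) (hQs : Qᵀ = Q)
    (hQp : ∀ a, 0 ≤ qnorm Q a) (α ξ : ℝ)
    (hα : 0 < α) (hα1 : α < 1) (hξ : 0 < ξ) (hξ1 : ξ ≤ 1)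
    (T : (Fin n → ℝ) → (Fin n → ℝ))
    (hT : ∀ b1 b2, qnorm Q (T b1 - T b2) ≤ (1 - α + α * ξ ^ 2) * qnorm Q (b1 - b2)
      - (1 - α) / α * qnorm Q ((b1 - T b1) - (b2 - T b2)))
    (bstar : Fin n → ℝ) (hfix : T bstar = bstar)
    (b : ℕ → (Fin n → ℝ)) (hb : ∀ k, b (k + 1) = T (b k)) :
    ∀ k : ℕ, qnorm Q (b (k + 1) - b k) ≤
      1 / ((k : ℝ) + 1) * (α / (1 - α)) * qnorm Q (b 0 - bstar) :=
  stmt14_general n Q hQp α ξ hα hα1 hξ hξ1 T hT bstar hfix b hb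
end
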